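/- arXiv:1508.05674 — 2 statements merged into one kernel-verified Lean document; each statement's English description precedes it below -/
import Mathlib

section
/- Let n = 2m with m ≥ 1, let t be an integer with 1 ≤ t ≤ m-1 such that m/gcd(m,t) is odd, and let γ : 𝔽₂^m → 𝔽₂ be a rotation symmetric Boolean function of algebraic degree d with d ≥ 3. Then the Boolean function f_t on 𝔽₂^n defined by f_t(x₀,…,x_{n-1}) = Σ_{i=0}^{n-1} (x_i·x_{i+t}·x_{i+m} + x_i·x_{i+t}) + Σ_{i=0}^{m-1} x_i·x_{i+m} + γ(x₀+x_m, x₁+x_{m+1}, …, x_{m-1}+x_{2m-1}) is rotation symmetric and has algebraic degree d. -/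
/-- A Boolean function `f` on `𝔽₂ⁿ` (coordinates indexed modulo `n`) is rotation symmetric if
`f(x₁,…,x_{n-1},x₀) = f(x₀,…,x_{n-1})` for all `x`. -/
def RotationSymmetric {n : ℕ} (f : (ZMod n → ZMod 2) → ZMod 2) : Prop :=
  ∀ x : ZMod n → ZMod 2, f (fun i => x (i + 1)) = f x

/-- A Boolean function `f` on `𝔽₂ⁿ` has algebraic degree `d` if its (unique) algebraic normal
form — a multilinear polynomial over `𝔽₂` representing `f` — has total degree `d`. -/
def HasAlgebraicDegree {n : ℕ} (f : (ZMod n → ZMod 2) → ZMod 2) (d : ℕ) : Prop :=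
  ∃ p : MvPolynomial (ZMod n) (ZMod 2),
    (∀ s ∈ p.support, ∀ i, s i ≤ 1) ∧
    (∀ x, MvPolynomial.eval x p = f x) ∧
    p.totalDegree = d

/-!
Rotation symmetry: the shift `x ↦ x(· + 1)` permutes the terms of the sum over `ℤ/2m`, and on the
folded coordinates `y_j = x_j + x_{j+m}` it acts as the rotation of `ℤ/m`; at the wrap-around
`j = m - 1` the shifted pair `(m, 2m)` is the pair `(0, m)` of `j + 1 = 0` in reverse order, and
both `x_j x_{j+m}` and `x_j + x_{j+m}` are symmetric in the pair.

Degree: if `q` is the ANF of `γ`, the ANF of `f_t` is the cubic and quadratic part plus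
`q(X_j + X_{j+m})`. The substituted linear forms use pairwise disjoint variables, so the result is
again multilinear, and its degree is at most `max 3 d = d`. For the lower bound substitute
`X_j ↦ Y_j` for `j < m` and `X_j ↦ 0` otherwise: this kills every `X_i X_{i+m}`, hence every
cubic term and the pairing sum, and undoes the folding, leaving `q` plus a part of degree `≤ 2`.
Since `d ≥ 3` this has degree `d`, and a substitution by forms of degree `≤ 1` does not raise the
degree.
-/

open Finset MvPolynomial

/- The multilinear polynomials, those of the condition in `HasAlgebraicDegree`, form the submodule
`restrictDegree σ R 1`. -/

namespace MvPolynomial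

variable {σ τ ι R : Type*} [CommSemiring R]

theorem mem_restrictDegree_iff_degreeOf_le {p : MvPolynomial σ R} {n : ℕ} :
    p ∈ restrictDegree σ R n ↔ ∀ i, p.degreeOf i ≤ n := by
  simp only [mem_restrictDegree, degreeOf_le_iff]
  exact ⟨fun h i s hs => h s hs i, fun h s hs i => h i s hs⟩

theorem X_mem_restrictDegree_one (i : σ) : (X i : MvPolynomial σ R) ∈ restrictDegree σ R 1 := by
  classical
  refine (mem_restrictDegree _ _ _).2 fun s hs j => ?_
  obtain rfl := mem_singleton.1 (support_monomial_subset
    (show s ∈ (monomial (Finsupp.single i 1) (1 : R)).support from hs))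
  rw [Finsupp.single_apply]
  split_ifs <;> omega

theorem mul_mem_restrictDegree_one {p q : MvPolynomial σ R} (hp : p ∈ restrictDegree σ R 1)
    (hq : q ∈ restrictDegree σ R 1) (hpq : Disjoint p.vars q.vars) :
    p * q ∈ restrictDegree σ R 1 := by
  rw [mem_restrictDegree_iff_degreeOf_le] at hp hq ⊢
  intro i
  refine (degreeOf_mul_le i p q).trans ?_
  by_cases hi : i ∈ p.vars
  · have : q.degreeOf i = 0 := by
      by_contra h
      exact disjoint_left.1 hpq hi (mem_vars_iff_degreeOf_ne_zero.2 h)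
    simpa [this] using hp i
  · have : p.degreeOf i = 0 := by
      by_contra h
      exact hi (mem_vars_iff_degreeOf_ne_zero.2 h)
    simpa [this] using hq i

theorem X_mul_X_mem_restrictDegree_one [Nontrivial R] {a b : σ} (hab : a ≠ b) :
    (X a * X b : MvPolynomial σ R) ∈ restrictDegree σ R 1 :=
  mul_mem_restrictDegree_one (X_mem_restrictDegree_one a) (X_mem_restrictDegree_one b)
    (by simpa [vars_X] using hab)

theorem X_mul_X_mul_X_mem_restrictDegree_one [Nontrivial R] {a b c : σ} (hab : a ≠ b)
    (hac : a ≠ c) (hbc : b ≠ c) :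
    (X a * X b * X c : MvPolynomial σ R) ∈ restrictDegree σ R 1 := by
  classical
  exact mul_mem_restrictDegree_one (X_mul_X_mem_restrictDegree_one hab)
    (X_mem_restrictDegree_one c)
    (disjoint_of_subset_left (vars_mul _ _) (by simp [vars_X, hac.symm, hbc.symm]))

theorem prod_mem_restrictDegree_one {s : Finset ι} {g : ι → MvPolynomial σ R}
    (hg : ∀ j ∈ s, g j ∈ restrictDegree σ R 1)
    (hdisj : (s : Set ι).PairwiseDisjoint fun j => (g j).vars) :
    ∏ j ∈ s, g j ∈ restrictDegree σ R 1 := by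
  classical
  induction s using Finset.induction_on with
  | empty => simp [mem_restrictDegree_iff_degreeOf_le]
  | insert a s ha ih =>
    rw [prod_insert ha]
    refine mul_mem_restrictDegree_one (hg a (mem_insert_self a s))
      (ih (fun j hj => hg j (mem_insert_of_mem hj))
        (hdisj.subset (by simp))) ?_
    refine disjoint_of_subset_right (vars_prod _) ((disjoint_biUnion_right _ _ _).2 fun j hj => ?_)
    exact hdisj (by simp) (by simp [hj]) (ne_of_mem_of_not_mem hj ha).symm

theorem bind₁_mem_restrictDegree_one {g : σ → MvPolynomial τ R}
    {q : MvPolynomial σ R} (hq : q ∈ restrictDegree σ R 1)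
    (hg : ∀ j, g j ∈ restrictDegree τ R 1)
    (hdisj : Pairwise fun j k => Disjoint (g j).vars (g k).vars) :
    bind₁ g q ∈ restrictDegree τ R 1 := by
  rw [q.as_sum, map_sum]
  refine Submodule.sum_mem _ fun s hs => ?_
  rw [bind₁_monomial, C_mul']
  refine Submodule.smul_mem _ _ ?_
  have hs1 : ∀ j ∈ s.support, s j = 1 := fun j hj =>
    le_antisymm ((mem_restrictDegree _ _ _).1 hq s hs j)
      (Nat.one_le_iff_ne_zero.2 (Finsupp.mem_support_iff.1 hj))
  rw [prod_congr rfl fun j hj => by rw [hs1 j hj, pow_one]]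
  exact prod_mem_restrictDegree_one (fun j _ => hg j) fun j _ k _ hjk => hdisj hjk

theorem totalDegree_bind₁_le {g : σ → MvPolynomial τ R} (hg : ∀ j, (g j).totalDegree ≤ 1)
    (q : MvPolynomial σ R) : (bind₁ g q).totalDegree ≤ q.totalDegree := by
  conv_lhs => rw [q.as_sum, map_sum]
  refine totalDegree_finsetSum_le fun s hs => ?_
  rw [bind₁_monomial]
  calc (C (coeff s q) * ∏ j ∈ s.support, g j ^ s j).totalDegree
      ≤ ∑ j ∈ s.support, s j := by
        refine (totalDegree_mul _ _).trans ?_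
        rw [totalDegree_C, zero_add]
        refine (totalDegree_finsetProd _ _).trans (sum_le_sum fun j _ => ?_)
        exact (totalDegree_pow _ _).trans (by simpa using Nat.mul_le_mul_left (s j) (hg j))
    _ ≤ q.totalDegree := le_totalDegree hs

theorem totalDegree_X_mul_X_le [Nontrivial R] (a b : σ) :
    (X a * X b : MvPolynomial σ R).totalDegree ≤ 2 :=
  (totalDegree_mul _ _).trans (by simp [totalDegree_X])

theorem totalDegree_X_mul_X_mul_X_le [Nontrivial R] (a b c : σ) :
    (X a * X b * X c : MvPolynomial σ R).totalDegree ≤ 3 :=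
  (totalDegree_mul _ _).trans (by grw [totalDegree_X_mul_X_le, totalDegree_X])

end MvPolynomial

theorem Finset.sum_range_eq_sum_zmod_val {n : ℕ} [NeZero n] {M : Type*} [AddCommMonoid M]
    (F : ℕ → M) : ∑ i ∈ range n, F i = ∑ j : ZMod n, F j.val :=
  sum_nbij' (fun i => (i : ZMod n)) (fun j => j.val) (fun _ _ => mem_univ _)
    (fun j _ => mem_range.2 (ZMod.val_lt j))
    (fun _ hi => ZMod.val_cast_of_lt (mem_range.1 hi)) (fun j _ => ZMod.natCast_zmod_val j)
    (fun _ hi => by rw [ZMod.val_cast_of_lt (mem_range.1 hi)])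

theorem Finset.sum_range_natCast_add_one {n : ℕ} [NeZero n] {M : Type*} [AddCommMonoid M]
    (F : ZMod n → M) : ∑ i ∈ range n, F (i + 1) = ∑ i ∈ range n, F i := by
  simp only [sum_range_eq_sum_zmod_val fun i : ℕ => F (i + 1),
    sum_range_eq_sum_zmod_val fun i : ℕ => F i, ZMod.natCast_zmod_val]
  exact Fintype.sum_equiv (Equiv.addRight 1) _ _ fun _ => rfl

section Halves

variable {m : ℕ}

theorem ZMod.add_natCast_add_natCast_self (k : ZMod (2 * m)) : k + m + m = k := by
  rw [add_assoc, ← Nat.cast_add, ← two_mul, ZMod.natCast_self, add_zero]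

theorem ZMod.natCast_val_add_one [NeZero m] (j : ZMod m) :
    (((j + 1).val : ℕ) : ZMod (2 * m)) = j.val + 1 ∨
      (((j + 1).val : ℕ) : ZMod (2 * m)) = j.val + 1 + m := by
  have hj := ZMod.val_lt j
  have hv : (j + 1).val = (j.val + 1) % m := by
    rw [ZMod.val_add, ZMod.val_one_eq_one_mod, Nat.add_mod_mod]
  rcases Nat.lt_or_ge (j.val + 1) m with h | h
  · left
    rw [hv, Nat.mod_eq_of_lt h]
    push_cast
    ring
  · right
    have hwrap : ((j.val + 1 + m : ℕ) : ZMod (2 * m)) = 0 := by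
      rw [show j.val + 1 + m = 2 * m by omega, ZMod.natCast_self]
    rw [hv, show j.val + 1 = m by omega, Nat.mod_self, Nat.cast_zero]
    push_cast at hwrap
    exact hwrap.symm

theorem apply_pair_natCast_val_add_one [NeZero m] {α β : Type*} {g : α → α → β}
    (hg : ∀ a b, g a b = g b a) (x : ZMod (2 * m) → α) (j : ZMod m) :
    g (x (j + 1).val) (x ((j + 1).val + m)) = g (x (j.val + 1)) (x (j.val + 1 + m)) := by
  rcases ZMod.natCast_val_add_one j with h | h <;> rw [h]
  rw [ZMod.add_natCast_add_natCast_self]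
  exact hg _ _

end Halves

def ft (m t : ℕ) (γ : (ZMod m → ZMod 2) → ZMod 2) (x : ZMod (2 * m) → ZMod 2) : ZMod 2 :=
  ∑ i ∈ range (2 * m), (x i * x (i + t) * x (i + m) + x i * x (i + t)) +
    ∑ i ∈ range m, x i * x (i + m) +
    γ (fun j : ZMod m => x j.val + x (j.val + m : ZMod (2 * m)))

theorem rotationSymmetric_ft {m : ℕ} [NeZero m] (t : ℕ) {γ : (ZMod m → ZMod 2) → ZMod 2}
    (hγ : RotationSymmetric γ) : RotationSymmetric (ft m t γ) := by
  intro x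
  simp only [ft, add_right_comm _ _ (1 : ZMod (2 * m))]
  have hcubic := sum_range_natCast_add_one (n := 2 * m)
    fun k => x k * x (k + t) * x (k + m) + x k * x (k + t)
  have hpairs : ∑ i ∈ range m, x ((i : ZMod (2 * m)) + 1) * x (i + 1 + m) =
      ∑ i ∈ range m, x i * x (i + m) := by
    simp only [sum_range_eq_sum_zmod_val fun i : ℕ =>
      x ((i : ZMod (2 * m)) + 1) * x (i + 1 + m),
      sum_range_eq_sum_zmod_val fun i : ℕ => x i * x (i + m),
      ← apply_pair_natCast_val_add_one mul_comm]
    exact Fintype.sum_equiv (Equiv.addRight 1) _ _ fun _ => rfl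
  have hfold : (fun j : ZMod m => x ((j.val : ZMod (2 * m)) + 1) + x (j.val + 1 + m)) =
      fun j => x (j + 1).val + x ((j + 1).val + m : ZMod (2 * m)) :=
    funext fun j => (apply_pair_natCast_val_add_one add_comm x j).symm
  rw [hcubic, hpairs, hfold]
  exact congrArg _ (hγ fun j => x j.val + x (j.val + m : ZMod (2 * m)))

section Substitutions
variable {m : ℕ} [NeZero m]

noncomputable def pairVar (j : ZMod m) : MvPolynomial (ZMod (2 * m)) (ZMod 2) :=
  X (j.val : ZMod (2 * m)) + X (j.val + m : ZMod (2 * m))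

noncomputable def lowerVar (k : ZMod (2 * m)) : MvPolynomial (ZMod m) (ZMod 2) :=
  if k.val < m then X (k.val : ZMod m) else 0

theorem castHom_eq_of_mem_vars_pairVar {j : ZMod m} {k : ZMod (2 * m)}
    (hk : k ∈ (pairVar j).vars) :
    ZMod.castHom (dvd_mul_left m 2) (ZMod m) k = j := by
  classical
  have := vars_add_subset _ _ hk
  simp only [vars_X, mem_union, mem_singleton] at this
  rcases this with rfl | rfl <;>
    simp only [map_add, map_natCast, ZMod.natCast_self, add_zero, ZMod.natCast_zmod_val]

theorem eval_bind₁_pairVar (x : ZMod (2 * m) → ZMod 2) (q : MvPolynomial (ZMod m) (ZMod 2)) :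
    eval x (bind₁ pairVar q) = eval (fun j => x j.val + x (j.val + m : ZMod (2 * m))) q :=
  (eval₂Hom_bind₁ _ _ _ _).trans (by simp [pairVar])

theorem lowerVar_mul_lowerVar_add_natCast_self (k : ZMod (2 * m)) :
    lowerVar k * lowerVar (k + (m : ZMod (2 * m))) = 0 := by
  have hk := ZMod.val_lt k
  have hm := NeZero.pos m
  unfold lowerVar
  by_cases hlow : k.val < m
  · have : ¬(k + m).val < m := by
      rw [ZMod.val_add, ZMod.val_cast_of_lt (by omega : m < 2 * m), Nat.mod_eq_of_lt (by omega)]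
      omega
    rw [if_neg this, mul_zero]
  · rw [if_neg hlow, zero_mul]

theorem bind₁_lowerVar_pairVar (j : ZMod m) : bind₁ lowerVar (pairVar j) = X j := by
  have hj := ZMod.val_lt j
  have h1 : (j.val : ZMod (2 * m)).val = j.val := ZMod.val_cast_of_lt (by omega)
  have h2 : (j.val + m : ZMod (2 * m)).val = j.val + m := by
    rw [← Nat.cast_add, ZMod.val_cast_of_lt (by omega)]
  simp only [pairVar, lowerVar, map_add, bind₁_X_right, h1, h2, if_pos hj,
    if_neg (Nat.not_lt.2 (Nat.le_add_left m j.val)), ZMod.natCast_zmod_val, add_zero]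

theorem totalDegree_lowerVar_le (k : ZMod (2 * m)) : (lowerVar k).totalDegree ≤ 1 := by
  unfold lowerVar
  split_ifs <;> simp [totalDegree_X]

end Substitutions

noncomputable def ftPoly (m t : ℕ) (q : MvPolynomial (ZMod m) (ZMod 2)) :
    MvPolynomial (ZMod (2 * m)) (ZMod 2) :=
  ∑ i ∈ range (2 * m),
      (X (i : ZMod (2 * m)) * X (i + t : ZMod (2 * m)) * X (i + m : ZMod (2 * m)) +
        X (i : ZMod (2 * m)) * X (i + t : ZMod (2 * m))) +
    ∑ i ∈ range m, X (i : ZMod (2 * m)) * X (i + m : ZMod (2 * m)) + bind₁ pairVar q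

section FtPoly

variable {m t : ℕ} [NeZero m] {q : MvPolynomial (ZMod m) (ZMod 2)}

theorem eval_ftPoly (x : ZMod (2 * m) → ZMod 2) :
    eval x (ftPoly m t q) = ft m t (fun y => eval y q) x := by
  simp [ftPoly, ft, eval_bind₁_pairVar]

theorem bind₁_lowerVar_ftPoly : bind₁ lowerVar (ftPoly m t q) =
    bind₁ lowerVar (∑ i ∈ range (2 * m), X (i : ZMod (2 * m)) * X (i + t : ZMod (2 * m))) + q := by
  simp [ftPoly, bind₁_bind₁, bind₁_lowerVar_pairVar,
    mul_right_comm _ (lowerVar _) (lowerVar (_ + (m : ZMod (2 * m)))),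
    lowerVar_mul_lowerVar_add_natCast_self]

theorem ftPoly_mem_restrictDegree_one (ht1 : 1 ≤ t) (htm : t < m)
    (hq : q ∈ restrictDegree (ZMod m) (ZMod 2) 1) :
    ftPoly m t q ∈ restrictDegree (ZMod (2 * m)) (ZMod 2) 1 := by
  have hm := NeZero.pos m
  have hne : ∀ a b : ℕ, a < 2 * m → b < 2 * m → a ≠ b → (a : ZMod (2 * m)) ≠ b :=
    fun a b ha hb hab h => hab (by
      simpa [ZMod.val_cast_of_lt ha, ZMod.val_cast_of_lt hb] using congrArg ZMod.val h)
  have ht0 : (t : ZMod (2 * m)) ≠ 0 := by simpa using hne t 0 (by omega) (by omega) (by omega)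
  have hm0 : (m : ZMod (2 * m)) ≠ 0 := by simpa using hne m 0 (by omega) (by omega) (by omega)
  have htm' : (t : ZMod (2 * m)) ≠ m := hne t m (by omega) (by omega) (by omega)
  refine add_mem (add_mem (Submodule.sum_mem _ fun i _ => add_mem ?_ ?_)
    (Submodule.sum_mem _ fun i _ => ?_)) ?_
  · exact X_mul_X_mul_X_mem_restrictDegree_one (fun h => ht0 (left_eq_add.1 h))
      (fun h => hm0 (left_eq_add.1 h)) (fun h => htm' (add_left_cancel h))
  · exact X_mul_X_mem_restrictDegree_one fun h => ht0 (left_eq_add.1 h)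
  · exact X_mul_X_mem_restrictDegree_one fun h => hm0 (left_eq_add.1 h)
  · refine bind₁_mem_restrictDegree_one hq
      (fun j => add_mem (X_mem_restrictDegree_one _) (X_mem_restrictDegree_one _))
      fun j k hjk => disjoint_left.2 fun a hj hk => hjk ?_
    exact (castHom_eq_of_mem_vars_pairVar hj).symm.trans (castHom_eq_of_mem_vars_pairVar hk)

theorem totalDegree_ftPoly_le (hq : 3 ≤ q.totalDegree) :
    (ftPoly m t q).totalDegree ≤ q.totalDegree := by
  refine (totalDegree_add _ _).trans (max_le ((totalDegree_add _ _).trans (max_le ?_ ?_)) ?_)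
  · exact totalDegree_finsetSum_le fun i _ => (totalDegree_add _ _).trans
      (max_le ((totalDegree_X_mul_X_mul_X_le _ _ _).trans hq)
        ((totalDegree_X_mul_X_le _ _).trans (by omega)))
  · exact totalDegree_finsetSum_le fun i _ => (totalDegree_X_mul_X_le _ _).trans (by omega)
  · exact totalDegree_bind₁_le (fun j => (totalDegree_add _ _).trans (by simp [totalDegree_X])) q

theorem le_totalDegree_ftPoly (hq : 3 ≤ q.totalDegree) :
    q.totalDegree ≤ (ftPoly m t q).totalDegree := by
  have hquad : (bind₁ lowerVar (∑ i ∈ range (2 * m),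
      X (i : ZMod (2 * m)) * X (i + t : ZMod (2 * m)))).totalDegree < q.totalDegree :=
    ((totalDegree_bind₁_le totalDegree_lowerVar_le _).trans
      (totalDegree_finsetSum_le fun i _ => totalDegree_X_mul_X_le _ _)).trans_lt (by omega)
  calc q.totalDegree = (bind₁ lowerVar (ftPoly m t q)).totalDegree := by
        rw [bind₁_lowerVar_ftPoly, totalDegree_add_eq_right_of_totalDegree_lt hquad]
    _ ≤ (ftPoly m t q).totalDegree := totalDegree_bind₁_le totalDegree_lowerVar_le _

end FtPoly

theorem hasAlgebraicDegree_ft {m t : ℕ} [NeZero m] (ht1 : 1 ≤ t) (htm : t < m) {d : ℕ}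
    (hd : 3 ≤ d) {γ : (ZMod m → ZMod 2) → ZMod 2} (hγ : HasAlgebraicDegree γ d) :
    HasAlgebraicDegree (ft m t γ) d := by
  obtain ⟨q, hq, hqγ, rfl⟩ := hγ
  obtain rfl : γ = fun y => eval y q := funext fun y => (hqγ y).symm
  exact ⟨ftPoly m t q, (mem_restrictDegree _ _ _).1
      (ftPoly_mem_restrictDegree_one ht1 htm ((mem_restrictDegree _ _ _).2 hq)),
    eval_ftPoly, (totalDegree_ftPoly_le hd).antisymm (le_totalDegree_ftPoly hd)⟩

theorem statement4_general (m t : ℕ) [NeZero m]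
    (ht1 : 1 ≤ t) (ht2 : t ≤ m - 1)
    (d : ℕ) (hd : 3 ≤ d)
    (γ : (ZMod m → ZMod 2) → ZMod 2)
    (hγrot : RotationSymmetric γ) (hγdeg : HasAlgebraicDegree γ d)
    (f : (ZMod (2 * m) → ZMod 2) → ZMod 2)
    (hf : ∀ x : ZMod (2 * m) → ZMod 2,
      f x = ∑ i ∈ Finset.range (2 * m), (x i * x (i + t) * x (i + m) + x i * x (i + t)) +
        ∑ i ∈ Finset.range m, x i * x (i + m) +
        γ (fun j : ZMod m => x j.val + x (j.val + m : ZMod (2 * m)))) :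
    RotationSymmetric f ∧ HasAlgebraicDegree f d := by
  obtain rfl : f = ft m t γ := funext hf
  have htm : t < m := by have := NeZero.pos m; omega
  exact ⟨rotationSymmetric_ft t hγrot, hasAlgebraicDegree_ft ht1 htm hd hγdeg⟩

/-- with `n = 2m`, `m ≥ 1`, `1 ≤ t ≤ m-1` with `m / gcd(m,t)` odd, and `γ` a
rotation symmetric Boolean function on `𝔽₂^m` of algebraic degree `d ≥ 3`, the function
`f_t(x) = Σ_{i=0}^{n-1} (xᵢ·x_{i+t}·x_{i+m} + xᵢ·x_{i+t}) + Σ_{i=0}^{m-1} xᵢ·x_{i+m}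
          + γ(x₀+x_m, …, x_{m-1}+x_{2m-1})`
is rotation symmetric and has algebraic degree `d`. -/
theorem statement4 (m t : ℕ) (hm : 1 ≤ m) [NeZero m]
    (ht1 : 1 ≤ t) (ht2 : t ≤ m - 1) (hodd : Odd (m / Nat.gcd m t))
    (d : ℕ) (hd : 3 ≤ d)
    (γ : (ZMod m → ZMod 2) → ZMod 2)
    (hγrot : RotationSymmetric γ) (hγdeg : HasAlgebraicDegree γ d)
    (f : (ZMod (2 * m) → ZMod 2) → ZMod 2)
    (hf : ∀ x : ZMod (2 * m) → ZMod 2,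
      f x = ∑ i ∈ Finset.range (2 * m), (x i * x (i + t) * x (i + m) + x i * x (i + t)) +
        ∑ i ∈ Finset.range m, x i * x (i + m) +
        γ (fun j : ZMod m => x j.val + x (j.val + m : ZMod (2 * m)))) :
    RotationSymmetric f ∧ HasAlgebraicDegree f d :=
  statement4_general m t ht1 ht2 d hd γ hγrot hγdeg f hf
end

section
/- Let n = 2m with m ≥ 1 and let g : 𝔽₂^n → 𝔽₂ be a Boolean function such that: (1) for each 0 ≤ i ≤ m-1, g is invariant under swapping the coordinates x_i and x_{i+m}; (2) for each 0 ≤ i ≤ m-1, no monomial of the algebraic normal form of g is divisible by x_i·x_{i+m}; and (3) g is rotation symmetric. Then there exists a rotation symmetric Boolean function γ : 𝔽₂^m → 𝔽₂ such that g(x₀,x₁,…,x_{n-1}) = γ(x₀+x_m, x₁+x_{m+1}, …, x_{m-1}+x_{2m-1}) for all x ∈ 𝔽₂^n. -/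
private lemma zmod2_cases : ∀ a : ZMod 2, a = 0 ∨ a = 1 := by decide

private def lift2 (m : ℕ) (y : ZMod m → ZMod 2) : ZMod (2*m) → ZMod 2 :=
  fun t => if t.val < m then y (t.val : ZMod m) else 0

private def step2 (m i : ℕ) (x : ZMod (2*m) → ZMod 2) : ZMod (2*m) → ZMod 2 :=
  Function.update
    (Function.update x (i : ZMod (2*m)) (x (i : ZMod (2*m)) + x ((i : ZMod (2*m)) + (m : ZMod (2*m)))))
    ((i : ZMod (2*m)) + (m : ZMod (2*m))) 0

private def red2 (m : ℕ) : ℕ → (ZMod (2*m) → ZMod 2) → (ZMod (2*m) → ZMod 2)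
  | 0, x => x
  | k+1, x => step2 m k (red2 m k x)

private lemma red2_spec (m : ℕ) [NeZero m] (k : ℕ)
    (x : ZMod (2*m) → ZMod 2) : k ≤ m → ∀ t : ZMod (2*m),
    red2 m k x t =
      if t.val < k then x t + x (t + (m : ZMod (2*m)))
      else if m ≤ t.val ∧ t.val < m + k then 0 else x t := by
  haveI : NeZero (2*m) := ⟨by have := NeZero.ne m; omega⟩
  have hm : 1 ≤ m := Nat.one_le_iff_ne_zero.mpr (NeZero.ne m)
  induction k with
  | zero =>
    intro _ t
    simp only [red2, Nat.not_lt_zero, if_false]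
    rw [if_neg (by omega)]
  | succ k ih =>
    intro hk t
    have hk' : k ≤ m := Nat.le_of_succ_le hk
    have hkm : k < m := hk
    have hpval : ((k : ℕ) : ZMod (2*m)).val = k := ZMod.val_natCast_of_lt (by omega)
    have hqcast : ((k + m : ℕ) : ZMod (2*m)) = (k : ZMod (2*m)) + (m : ZMod (2*m)) := by
      push_cast; ring
    have hqval : ((k : ZMod (2*m)) + (m : ZMod (2*m))).val = k + m := by
      rw [← hqcast, ZMod.val_natCast_of_lt (by omega)]
    set p : ZMod (2*m) := (k : ZMod (2*m)) with hp
    set q : ZMod (2*m) := p + (m : ZMod (2*m)) with hq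
    have htv : (t.val : ZMod (2*m)) = t := by
      simp [ZMod.natCast_val, ZMod.cast_id]
    have htlt : t.val < 2*m := t.val_lt
    have hpq : p ≠ q := fun h => by rw [h] at hpval; omega
    show step2 m k (red2 m k x) t = _
    unfold step2
    by_cases hq1 : t = q
    · rw [hq1, Function.update_self]
      have : t.val = k + m := by rw [hq1]; exact hqval
      rw [if_neg (by omega), if_pos (by omega)]
    · rw [Function.update_of_ne hq1]
      by_cases hp1 : t = p
      · rw [hp1, Function.update_self]
        have e1 : red2 m k x p = x p := by
          rw [ih hk' p, if_neg (by omega), if_neg (by omega)]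
        have e2 : red2 m k x (p + (m : ZMod (2*m))) = x (p + (m : ZMod (2*m))) := by
          rw [ih hk' (p + (m : ZMod (2*m)))]
          rw [show (p + (m : ZMod (2*m))).val = k + m from hqval]
          rw [if_neg (by omega), if_neg (by omega)]
        have : t.val = k := by rw [hp1]; exact hpval
        rw [e1, e2, if_pos (by omega)]
      · rw [Function.update_of_ne hp1, ih hk' t]
        have hne1 : t.val ≠ k := fun h => hp1 (by rw [← htv, h])
        have hne2 : t.val ≠ k + m := fun h => hq1 (by rw [← htv, h, hqcast])
        split_ifs <;> first | rfl | omega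

private lemma eval_affine (m : ℕ) [NeZero m] (P : MvPolynomial (ZMod (2*m)) (ZMod 2))
    (p q : ZMod (2*m)) (hpq : p ≠ q)
    (hsupp : ∀ s ∈ P.support, s p = 0 ∨ s q = 0) (x : ZMod (2*m) → ZMod 2) :
    MvPolynomial.eval (Function.update (Function.update x p 1) q 1) P
      + MvPolynomial.eval (Function.update (Function.update x p 1) q 0) P
      + MvPolynomial.eval (Function.update (Function.update x p 0) q 1) P
      + MvPolynomial.eval (Function.update (Function.update x p 0) q 0) P = 0 := by
  haveI : NeZero (2*m) := ⟨by have := NeZero.ne m; omega⟩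
  have key : ∀ c d : ZMod 2,
      MvPolynomial.eval (Function.update (Function.update x p c) q d) P
        = ∑ s ∈ P.support, MvPolynomial.coeff s P *
            (c ^ s p * (d ^ s q * ∏ j ∈ (Finset.univ.erase q).erase p, x j ^ s j)) := by
    intro c d
    rw [MvPolynomial.eval_eq']
    refine Finset.sum_congr rfl fun s _ => ?_
    congr 1
    rw [← Finset.mul_prod_erase Finset.univ _ (Finset.mem_univ q),
        ← Finset.mul_prod_erase (Finset.univ.erase q) _
          (Finset.mem_erase.mpr ⟨hpq, Finset.mem_univ p⟩)]
    have e1 : Function.update (Function.update x p c) q d q = d := Function.update_self _ _ _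
    have e2 : Function.update (Function.update x p c) q d p = c := by
      rw [Function.update_of_ne hpq, Function.update_self]
    rw [e1, e2]
    have e3 : ∏ j ∈ (Finset.univ.erase q).erase p,
        Function.update (Function.update x p c) q d j ^ s j
        = ∏ j ∈ (Finset.univ.erase q).erase p, x j ^ s j := by
      refine Finset.prod_congr rfl fun j hj => ?_
      have h1 := Finset.mem_erase.mp hj
      have h2 := Finset.mem_erase.mp h1.2
      rw [Function.update_of_ne h2.1, Function.update_of_ne h1.1]
    rw [e3]; ring
  rw [key, key, key, key, ← Finset.sum_add_distrib, ← Finset.sum_add_distrib,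
    ← Finset.sum_add_distrib]
  apply Finset.sum_eq_zero
  intro s hs
  have h4 : ∀ u v : ZMod 2, u + v + u + v = 0 := by decide
  have h5 : ∀ u v : ZMod 2, u + u + v + v = 0 := by decide
  rcases hsupp s hs with h | h <;> simp only [h, pow_zero, one_mul]
  · exact h4 _ _
  · exact h5 _ _

private lemma swap_update (m : ℕ) [NeZero m] (x : ZMod (2*m) → ZMod 2)
    (p q : ZMod (2*m)) (hpq : p ≠ q) (c d : ZMod 2) :
    (Function.update (Function.update x p c) q d ∘ (Equiv.swap p q))
      = Function.update (Function.update x p d) q c := by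
  funext j
  simp only [Function.comp_apply]
  rcases eq_or_ne j p with rfl | hjp
  · rw [Equiv.swap_apply_left, Function.update_self, Function.update_of_ne hpq,
      Function.update_self]
  · rcases eq_or_ne j q with rfl | hjq
    · rw [Equiv.swap_apply_right, Function.update_of_ne hpq, Function.update_self,
        Function.update_self]
    · rw [Equiv.swap_apply_of_ne_of_ne hjp hjq, Function.update_of_ne hjq,
        Function.update_of_ne hjp, Function.update_of_ne hjq, Function.update_of_ne hjp]

/-- with `n = 2m`, `m ≥ 1`, if a Boolean function `g` on `𝔽₂ⁿ` satisfies
(1) for each `0 ≤ i ≤ m-1`, `g` is invariant under swapping coordinates `xᵢ` and `x_{i+m}`;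
(2) no monomial of the algebraic normal form of `g` is divisible by `xᵢ·x_{i+m}`
    for any `0 ≤ i ≤ m-1`;
(3) `g` is rotation symmetric;
then there is a rotation symmetric Boolean function `γ` on `𝔽₂^m` with
`g(x₀,…,x_{n-1}) = γ(x₀+x_m, x₁+x_{m+1}, …, x_{m-1}+x_{2m-1})`. -/
theorem statement5 (m : ℕ) (hm : 1 ≤ m) [NeZero m]
    (g : (ZMod (2 * m) → ZMod 2) → ZMod 2)
    (h1 : ∀ i ∈ Finset.range m, ∀ x : ZMod (2 * m) → ZMod 2,
      g (x ∘ Equiv.swap (i : ZMod (2 * m)) ((i : ZMod (2 * m)) + m)) = g x)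
    (h2 : ∃ p : MvPolynomial (ZMod (2 * m)) (ZMod 2),
      (∀ s ∈ p.support, ∀ j, s j ≤ 1) ∧
      (∀ x, MvPolynomial.eval x p = g x) ∧
      (∀ i ∈ Finset.range m, ∀ s ∈ p.support,
        s (i : ZMod (2 * m)) = 0 ∨ s ((i : ZMod (2 * m)) + m) = 0))
    (h3 : RotationSymmetric g) :
    ∃ γ : (ZMod m → ZMod 2) → ZMod 2, RotationSymmetric γ ∧
      ∀ x : ZMod (2 * m) → ZMod 2,
        g x = γ (fun j : ZMod m => x j.val + x (j.val + m : ZMod (2 * m))) := by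
  haveI : NeZero (2*m) := ⟨by have := NeZero.ne m; omega⟩
  obtain ⟨P, -, heval, hsupp⟩ := h2
  -- one reduction step preserves g
  have gstep : ∀ i : ℕ, i < m → ∀ x : ZMod (2*m) → ZMod 2, g (step2 m i x) = g x := by
    intro i him x
    have hpval : ((i : ℕ) : ZMod (2*m)).val = i := ZMod.val_natCast_of_lt (by omega)
    have hqval : ((i : ZMod (2*m)) + (m : ZMod (2*m))).val = i + m := by
      rw [show (i : ZMod (2*m)) + (m : ZMod (2*m)) = ((i + m : ℕ) : ZMod (2*m)) by push_cast; ring,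
        ZMod.val_natCast_of_lt (by omega)]
    set p : ZMod (2*m) := (i : ZMod (2*m)) with hp
    set q : ZMod (2*m) := p + (m : ZMod (2*m)) with hq
    have hpq : p ≠ q := fun h => by rw [h] at hpval; omega
    -- swap symmetry for updated vectors
    have hswap : ∀ c d : ZMod 2,
        g (Function.update (Function.update x p c) q d)
          = g (Function.update (Function.update x p d) q c) := by
      intro c d
      have hg := h1 i (Finset.mem_range.mpr him) (Function.update (Function.update x p c) q d)
      rw [← hp, ← hq] at hg
      rw [swap_update m x p q hpq c d] at hg
      exact hg.symm
    have haff : g (Function.update (Function.update x p 1) q 1)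
        + g (Function.update (Function.update x p 1) q 0)
        + g (Function.update (Function.update x p 0) q 1)
        + g (Function.update (Function.update x p 0) q 0) = 0 := by
      rw [← heval, ← heval, ← heval, ← heval]
      exact eval_affine m P p q hpq (fun s hs => hsupp i (Finset.mem_range.mpr him) s hs) x
    have hx : Function.update (Function.update x p (x p)) q (x q) = x := by
      have : Function.update x p (x p) = x := Function.update_eq_self p x
      rw [this, Function.update_eq_self]
    show g (Function.update (Function.update x p (x p + x q)) q 0) = g x
    conv_rhs => rw [← hx]
    have h00 : (0 : ZMod 2) + 0 = 0 := by decide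
    have h10 : (1 : ZMod 2) + 0 = 1 := by decide
    have h01 : (0 : ZMod 2) + 1 = 1 := by decide
    have h11 : (1 : ZMod 2) + 1 = 0 := by decide
    rcases zmod2_cases (x p) with ha | ha <;> rcases zmod2_cases (x q) with hb | hb <;>
      rw [ha, hb]
    · rw [h00]
    · rw [h01]; exact hswap 1 0
    · rw [h10]
    · rw [h11]
      have h4 : ∀ a b c d : ZMod 2, a + b + c + d = 0 → b = c → d = a := by decide
      exact h4 _ _ _ _ haff (hswap 1 0)
  have gred : ∀ k : ℕ, k ≤ m → ∀ x, g (red2 m k x) = g x := by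
    intro k
    induction k with
    | zero => intro _ x; rfl
    | succ k ih =>
      intro hk x
      show g (step2 m k (red2 m k x)) = g x
      rw [gstep k (by omega), ih (by omega)]
  refine ⟨fun y => g (lift2 m y), ?_, ?_⟩
  · -- rotation symmetry of γ
    intro y
    show g (lift2 m fun j => y (j + 1)) = g (lift2 m y)
    have base := h3 (lift2 m y)
    have hred : red2 m m (fun t => lift2 m y (t + 1)) = lift2 m (fun j => y (j + 1)) := by
      funext t
      rw [red2_spec m m (fun t => lift2 m y (t + 1)) le_rfl t]
      have htlt : t.val < 2*m := t.val_lt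
      have htv : (t.val : ZMod (2*m)) = t := by simp [ZMod.natCast_val, ZMod.cast_id]
      by_cases h : t.val < m
      · rw [if_pos h]
        have c1 : t + 1 = ((t.val + 1 : ℕ) : ZMod (2*m)) := by push_cast [htv]; ring
        have c2 : t + (m : ZMod (2*m)) + 1 = ((t.val + m + 1 : ℕ) : ZMod (2*m)) := by
          push_cast [htv]; ring
        show lift2 m y (t+1) + lift2 m y (t + (m : ZMod (2*m)) + 1) = lift2 m (fun j => y (j+1)) t
        rw [c1, c2]
        unfold lift2
        rw [if_pos h]
        by_cases h2 : t.val + 1 < m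
        · rw [ZMod.val_natCast_of_lt (show t.val + 1 < 2*m by omega)]
          rw [ZMod.val_natCast_of_lt (show t.val + m + 1 < 2*m by omega)]
          rw [if_pos h2, if_neg (by omega), add_zero]
          congr 1
          push_cast
          ring
        · have hm1 : t.val + 1 = m := by omega
          have e1 : ((t.val + 1 : ℕ) : ZMod (2*m)).val = m := by
            rw [hm1, ZMod.val_natCast_of_lt (by omega)]
          have e2 : ((t.val + m + 1 : ℕ) : ZMod (2*m)) = 0 := by
            rw [show t.val + m + 1 = 2*m by omega]
            exact_mod_cast ZMod.natCast_self (2*m)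
          rw [e1, if_neg (by omega), e2]
          rw [ZMod.val_zero, if_pos (by omega), zero_add]
          congr 1
          have : ((t.val : ℕ) : ZMod m) + 1 = ((t.val + 1 : ℕ) : ZMod m) := by push_cast; ring
          rw [this, hm1, ZMod.natCast_self]
          norm_num
      · rw [if_neg h, if_pos (by omega)]
        show _ = lift2 m (fun j => y (j+1)) t
        unfold lift2
        rw [if_neg h]
    calc g (lift2 m fun j => y (j + 1)) = g (red2 m m (fun t => lift2 m y (t + 1))) := by
          rw [hred]
      _ = g (fun t => lift2 m y (t + 1)) := gred m le_rfl _
      _ = g (lift2 m y) := base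
  · intro x
    show g x = g (lift2 m (fun j => x j.val + x (j.val + m : ZMod (2*m))))
    have key : lift2 m (fun j => x j.val + x (j.val + m : ZMod (2*m))) = red2 m m x := by
      funext t
      rw [red2_spec m m x le_rfl t]
      have htlt : t.val < 2*m := t.val_lt
      have htv : (t.val : ZMod (2*m)) = t := by simp [ZMod.natCast_val, ZMod.cast_id]
      unfold lift2
      by_cases h : t.val < m
      · rw [if_pos h, if_pos h]
        have hjval : ((t.val : ℕ) : ZMod m).val = t.val := ZMod.val_natCast_of_lt h
        simp only [hjval]
        rw [htv]
      · rw [if_neg h, if_neg h, if_pos (by omega)]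
    rw [key]
    exact (gred m le_rfl x).symm
end
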